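/- (Per-iteration PartiMax bound) Let i* = argmax_{i ∈ X \ A} Δ_f(i|A), and let i' be the maximizer of Δ_f(·|A) over r samples drawn i.i.d. with Pr(i = i_j) = Δ_f(i_j|A)/(t·m), where r ≥ t·m/2 - 1. Then Δ_f(i*|A) - E[Δ_f(i'|A)] ≤ (r/(r+1))^r · Δ_f(i*|A). -/

import Mathlib

/-!
Sampling proportionally to the marginal gains, the best of `r` samples falls short of a box `i*`
only when every sample lands in the set of boxes with a strictly smaller gain, and then
by at most `Δ(i*)`; so the expected shortfall is at most `q ^ r · Δ(i*)`, where `q` is the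
probability mass of that set. Since every uncovered particle lies in exactly `t` boxes, the gains
sum to `c = t·m`, whence `q ≤ 1 - Δ(i*)/c`. If `Δ(i*) ≥ 2`, the hypothesis on `r` gives
`c ≤ (r + 1) Δ(i*)` and so `q ≤ r/(r+1)`; if `Δ(i*) ≤ 1`, every box of smaller gain has gain
`0` and `q = 0`.
-/

open Finset

theorem sum_card_filter_eq_mul {ι σ : Type*} [Fintype ι] (covers : ι → σ → Prop)
    [∀ i, DecidablePred (covers i)] (U : Finset σ) (t : ℕ)
    (ht : ∀ s ∈ U, (univ.filter fun i : ι => covers i s).card = t) :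
    ∑ i, (U.filter (covers i)).card = t * U.card := by
  have := sum_card_bipartiteAbove_eq_sum_card_bipartiteBelow covers (s := univ) (t := U)
  simp only [bipartiteAbove, bipartiteBelow] at this
  rw [this, sum_congr rfl ht, sum_const, smul_eq_mul, mul_comm]

section Sampling

variable {ι : Type*} [Fintype ι]

theorem sub_sum_prod_mul_sup'_le (p f : ι → ℝ) (hp0 : ∀ i, 0 ≤ p i) (hp1 : ∑ i, p i = 1)
    (hf0 : ∀ i, 0 ≤ f i) (istar : ι) {r : ℕ}
    (hr : (univ : Finset (Fin r)).Nonempty) :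
    f istar - ∑ ω : Fin r → ι, (∏ l, p (ω l)) * univ.sup' hr (fun l => f (ω l)) ≤
      (∑ i ∈ univ.filter (fun i => f i < f istar), p i) ^ r * f istar := by
  set g : ι → ℝ := fun i => if f i < f istar then p i else 0
  have hg0 : ∀ i, 0 ≤ g i := fun i => by positivity [hp0 i]
  have hpoint : ∀ ω : Fin r → ι,
      (∏ l, p (ω l)) * (f istar - univ.sup' hr (fun l => f (ω l))) ≤
        (∏ l, g (ω l)) * f istar := by
    intro ω
    by_cases hbad : ∀ l, f (ω l) < f istar
    · have hg : ∏ l, g (ω l) = ∏ l, p (ω l) :=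
        prod_congr rfl fun l _ => if_pos (hbad l)
      obtain ⟨l₀, -⟩ := id hr
      have hsup0 : 0 ≤ univ.sup' hr (fun l => f (ω l)) :=
        (hf0 (ω l₀)).trans (le_sup' (fun l => f (ω l)) (mem_univ l₀))
      rw [hg]
      exact mul_le_mul_of_nonneg_left (by linarith) (prod_nonneg fun l _ => hp0 (ω l))
    · obtain ⟨l, hl⟩ := not_forall.1 hbad
      have hsup : f istar ≤ univ.sup' hr (fun l => f (ω l)) :=
        (not_lt.1 hl).trans (le_sup' (fun l => f (ω l)) (mem_univ l))
      exact (mul_nonpos_of_nonneg_of_nonpos (prod_nonneg fun l _ => hp0 (ω l))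
        (by linarith)).trans (mul_nonneg (prod_nonneg fun l _ => hg0 (ω l)) (hf0 istar))
  calc f istar - ∑ ω : Fin r → ι, (∏ l, p (ω l)) * univ.sup' hr (fun l => f (ω l))
      = ∑ ω : Fin r → ι, (∏ l, p (ω l)) * (f istar - univ.sup' hr (fun l => f (ω l))) := by
        simp only [mul_sub, sum_sub_distrib, ← sum_mul, ← Fintype.sum_pow, hp1, one_pow,
          one_mul]
    _ ≤ ∑ ω : Fin r → ι, (∏ l, g (ω l)) * f istar := sum_le_sum fun ω _ => hpoint ω
    _ = (∑ i ∈ univ.filter (fun i => f i < f istar), p i) ^ r * f istar := by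
        rw [← sum_mul, ← Fintype.sum_pow, sum_filter]

theorem sum_filter_lt_le_sum_sub (f : ι → ℝ) (hf0 : ∀ i, 0 ≤ f i) (istar : ι) :
    ∑ i ∈ univ.filter (fun i => f i < f istar), f i ≤ ∑ i, f i - f istar := by
  classical
  rw [← sum_erase_eq_sub (mem_univ istar)]
  refine sum_le_sum_of_subset_of_nonneg (fun i hi => ?_) fun i _ _ => hf0 i
  exact mem_erase.2 ⟨fun h => (mem_filter.1 hi).2.ne (congrArg f h), mem_univ i⟩

theorem sum_filter_lt_div_le_div_succ (Δ : ι → ℕ) (istar : ι) {c : ℝ} (hc0 : 0 < c)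
    (hc : ∑ i, (Δ i : ℝ) = c) {r : ℕ} (hr : c / 2 - 1 ≤ r) :
    ∑ i ∈ univ.filter (fun i => (Δ i : ℝ) < Δ istar), (Δ i : ℝ) / c ≤ r / (r + 1) := by
  by_cases h2 : 2 ≤ Δ istar
  · have hlt := sum_filter_lt_le_sum_sub (fun i => (Δ i : ℝ)) (fun i => Nat.cast_nonneg _) istar
    have h2' : (2 : ℝ) ≤ Δ istar := by exact_mod_cast h2
    rw [hc] at hlt
    rw [← sum_div, div_le_div_iff₀ hc0 (by positivity)]
    nlinarith
  · have hzero : ∀ i ∈ univ.filter (fun i => (Δ i : ℝ) < Δ istar), (Δ i : ℝ) / c = 0 := by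
      intro i hi
      have : Δ i < Δ istar := by exact_mod_cast (mem_filter.1 hi).2
      simp [show Δ i = 0 by omega]
    rw [sum_eq_zero hzero]
    positivity

end Sampling

theorem partimax_per_iteration_general {ι σ : Type*} [Fintype ι] [DecidableEq ι]
    (Bp : Finset σ) (covers : ι → σ → Prop) [∀ i, DecidablePred (covers i)]
    (A : Finset ι) (t : ℕ) (ht0 : 0 < t)
    (ht : ∀ s ∈ Bp, (Finset.univ.filter fun i : ι => covers i s).card = t)
    (m : ℕ) (hm : m = (Bp.filter fun s => ∀ j ∈ A, ¬ covers j s).card) (hm0 : 0 < m)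
    (Δ : ι → ℕ)
    (hΔ : ∀ i : ι, Δ i = (Bp.filter fun s => covers i s ∧ ∀ j ∈ A, ¬ covers j s).card)
    (r : ℕ) (hr1 : 1 ≤ r) (hr : ((t : ℝ) * m) / 2 - 1 ≤ (r : ℝ))
    (istar : ι) :
    (Δ istar : ℝ) -
      ∑ ω : Fin r → ι, (∏ l, (Δ (ω l) : ℝ) / ((t : ℝ) * m)) *
        (Finset.univ.sup' ⟨⟨0, hr1⟩, Finset.mem_univ _⟩ fun l => (Δ (ω l) : ℝ))
      ≤ ((r : ℝ) / (r + 1)) ^ r * (Δ istar : ℝ) := by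
  set U := Bp.filter fun s => ∀ j ∈ A, ¬ covers j s
  have hΔU : ∀ i, Δ i = (U.filter (covers i)).card := fun i => by
    rw [hΔ, filter_filter]
    exact congrArg card (filter_congr fun s _ => and_comm)
  have hsum : ∑ i, (Δ i : ℝ) = t * m := by
    rw [hm]
    exact_mod_cast (sum_congr rfl fun i _ => hΔU i).trans
      (sum_card_filter_eq_mul covers U t fun s hs => ht s (mem_filter.1 hs).1)
  have hc0 : (0 : ℝ) < t * m := by positivity
  have hp1 : ∑ i, (Δ i : ℝ) / (t * m) = 1 := by rw [← sum_div, hsum, div_self hc0.ne']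
  calc _ ≤ (∑ i ∈ univ.filter (fun i => (Δ i : ℝ) < Δ istar), (Δ i : ℝ) / (t * m)) ^ r *
          (Δ istar : ℝ) :=
        sub_sum_prod_mul_sup'_le _ _ (fun i => by positivity) hp1 (fun i => by positivity) _ _
    _ ≤ _ := by
        gcongr
        exact sum_filter_lt_div_le_div_succ Δ istar hc0 hsum hr

/-- Per-iteration PartiMax bound: let `Δ i` be the number of particles covered by box `i`
but not by the current solution `A`, `i*` the best box outside `A`, and let `i'` be the
best of `r` boxes drawn i.i.d. with `Pr(i) = Δ(i)/(t·m)` (with `t` tilings and `m`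
uncovered particles).  If `r ≥ t·m/2 - 1` then
`Δ(i*) - E[Δ(i')] ≤ (r/(r+1))^r · Δ(i*)`. -/
theorem partimax_per_iteration {ι σ : Type*} [Fintype ι] [DecidableEq ι] [DecidableEq σ]
    (Bp : Finset σ) (covers : ι → σ → Prop) [∀ i, DecidablePred (covers i)]
    (A : Finset ι) (t : ℕ) (ht0 : 0 < t)
    (ht : ∀ s ∈ Bp, (Finset.univ.filter fun i : ι => covers i s).card = t)
    (m : ℕ) (hm : m = (Bp.filter fun s => ∀ j ∈ A, ¬ covers j s).card) (hm0 : 0 < m)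
    (Δ : ι → ℕ)
    (hΔ : ∀ i : ι, Δ i = (Bp.filter fun s => covers i s ∧ ∀ j ∈ A, ¬ covers j s).card)
    (r : ℕ) (hr1 : 1 ≤ r) (hr : ((t : ℝ) * m) / 2 - 1 ≤ (r : ℝ))
    (istar : ι) (histar : istar ∉ A) (hmax : ∀ i ∉ A, Δ i ≤ Δ istar) :
    (Δ istar : ℝ) -
      ∑ ω : Fin r → ι, (∏ l, (Δ (ω l) : ℝ) / ((t : ℝ) * m)) *
        (Finset.univ.sup' ⟨⟨0, hr1⟩, Finset.mem_univ _⟩ fun l => (Δ (ω l) : ℝ))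
      ≤ ((r : ℝ) / (r + 1)) ^ r * (Δ istar : ℝ) :=
  partimax_per_iteration_general Bp covers A t ht0 ht m hm hm0 Δ hΔ r hr1 hr istar
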